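/- arXiv:1611.01353 — 3 statements merged into one kernel-verified Lean document; each statement's English description precedes it below -/
import Mathlib

section
/- Let X be a finite type, let Z = Z_1 × … × Z_n be a product of finite types, and let p be a probability mass function on X × Z with marginal p_X on X and, for each x with p_X(x) > 0, conditional distribution p(·|x) on Z. Then among all factorized probability mass functions q(z) = ∏_{j=1}^n q_j(z_j) on Z (each q_j a pmf on Z_j), the expected Kullback–Leibler divergence Σ_x p_X(x) · KL(p(·|x) ‖ ∏_j q_j) is minimized by taking each q_j equal to the j-th marginal of the Z-marginal of p, i.e. q_j(z_j) = Σ_{x, z : z has j-th coordinate z_j} p(x, z). -/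
open scoped BigOperators

/-- A probability mass function on a finite type. -/
def IsPMF {Ω : Type*} [Fintype Ω] (p : Ω → ℝ) : Prop :=
  (∀ ω, 0 ≤ p ω) ∧ ∑ ω, p ω = 1

/-- Kullback–Leibler divergence between two pmfs on a finite type, valued in the
extended reals: it is `⊤` if `p ω > 0` for some `ω` with `q ω = 0`, and otherwise
`∑ ω, p ω * log (p ω / q ω)` (with the convention `0 * log 0 = 0`, which holds
automatically since real multiplication by `0` gives `0`). -/
noncomputable def klDiv {Ω : Type*} [Fintype Ω] (p q : Ω → ℝ) : EReal :=
  if ∃ ω, 0 < p ω ∧ q ω = 0 then ⊤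
  else ((∑ ω, p ω * Real.log (p ω / q ω) : ℝ) : EReal)

/-- `X`-marginal of a joint pmf on `X × Z`. -/
noncomputable def margX {X Z : Type*} [Fintype X] [Fintype Z] (p : X × Z → ℝ) : X → ℝ :=
  fun x => ∑ z, p (x, z)

/-- `Z`-marginal of a joint pmf on `X × Z`. -/
noncomputable def margZ {X Z : Type*} [Fintype X] [Fintype Z] (p : X × Z → ℝ) : Z → ℝ :=
  fun z => ∑ x, p (x, z)

/-- Conditional distribution on `Z` given `x`, for a joint pmf on `X × Z`
(junk value `0` when `margX p x = 0`, which is weighted by `0` in all statements). -/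
noncomputable def condZ {X Z : Type*} [Fintype X] [Fintype Z] (p : X × Z → ℝ) : X → Z → ℝ :=
  fun x z => p (x, z) / margX p x

/-- The `j`-th coordinate marginal of a pmf on a finite product `∀ j, Z j`. -/
noncomputable def margJ {n : ℕ} {Z : Fin n → Type*} [∀ j, Fintype (Z j)]
    [∀ j, DecidableEq (Z j)] (r : (∀ j, Z j) → ℝ) (j : Fin n) : Z j → ℝ :=
  fun zj => ∑ z : ∀ j, Z j, if z j = zj then r z else 0

/- ### Auxiliary lemmas -/

lemma ereal_coe_sum {ι : Type*} (s : Finset ι) (f : ι → ℝ) :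
    ((∑ i ∈ s, f i : ℝ) : EReal) = ∑ i ∈ s, (f i : EReal) :=
  map_sum (⟨⟨Real.toEReal, EReal.coe_zero⟩, EReal.coe_add⟩ : ℝ →+ EReal) f s

lemma ereal_mul_nonneg {a b : EReal} (ha : 0 ≤ a) (hb : 0 ≤ b) : 0 ≤ a * b := by
  rcases ha.eq_or_lt with h | h
  · rw [← h, EReal.zero_mul]
  rcases hb.eq_or_lt with h' | h'
  · rw [← h', mul_zero]
  · exact (EReal.mul_pos h h').le

/-- Gibbs' inequality. -/
lemma gibbs {Ω : Type*} [Fintype Ω] (a b : Ω → ℝ) (ha : ∀ ω, 0 ≤ a ω) (hb : ∀ ω, 0 ≤ b ω)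
    (hab : ∑ ω, b ω ≤ ∑ ω, a ω) (h0 : ∀ ω, 0 < a ω → 0 < b ω) :
    0 ≤ ∑ ω, a ω * Real.log (a ω / b ω) := by
  have key : ∀ ω, a ω - b ω ≤ a ω * Real.log (a ω / b ω) := by
    intro ω
    rcases (ha ω).eq_or_lt with h | h
    · rw [← h]
      simp only [zero_mul, zero_sub, neg_nonpos]
      linarith [hb ω]
    · have hbp := h0 ω h
      have hlog : Real.log (b ω / a ω) ≤ b ω / a ω - 1 :=
        Real.log_le_sub_one_of_pos (by positivity)
      have hinv : Real.log (a ω / b ω) = - Real.log (b ω / a ω) := by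
        rw [← Real.log_inv]
        congr 1
        field_simp
      have hba : a ω * (b ω / a ω) = b ω := by field_simp
      rw [hinv]
      nlinarith [h, hlog]
  calc (0:ℝ) = ∑ ω, a ω - ∑ ω, b ω - (∑ ω, a ω - ∑ ω, b ω) := by ring
  _ ≤ ∑ ω, (a ω - b ω) := by rw [Finset.sum_sub_distrib]; linarith
  _ ≤ _ := Finset.sum_le_sum fun ω _ => key ω

/-- Each summand in the expected KL divergence is nonnegative. -/
lemma term_nonneg {X W : Type*} [Fintype X] [Fintype W] (p : X × W → ℝ)
    (hp0 : ∀ a, 0 ≤ p a) (Q : W → ℝ) (hQ0 : ∀ w, 0 ≤ Q w) (hQ1 : ∑ w, Q w ≤ 1) (x : X) :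
    0 ≤ (margX p x : EReal) * klDiv (condZ p x) Q := by
  have hmX : 0 ≤ margX p x := Finset.sum_nonneg fun z _ => hp0 _
  rcases hmX.eq_or_lt with h | h
  · rw [← h, EReal.coe_zero, EReal.zero_mul]
  · apply ereal_mul_nonneg (by exact_mod_cast h.le)
    rw [klDiv]
    split_ifs with hc
    · exact le_top
    · push_neg at hc
      have hc' : ∀ w, 0 < condZ p x w → 0 < Q w := fun w hw =>
        (hQ0 w).lt_of_ne' (hc w hw)
      have hsum : ∑ w, condZ p x w = 1 := by
        simp only [condZ, ← Finset.sum_div]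
        rw [show (∑ i : W, p (x, i)) = margX p x from rfl, div_self h.ne']
      have : (0:ℝ) ≤ ∑ w, condZ p x w * Real.log (condZ p x w / Q w) := by
        apply gibbs _ _ (fun w => div_nonneg (hp0 _) hmX) hQ0 _ hc'
        calc ∑ ω : W, Q ω ≤ 1 := hQ1
        _ = ∑ w, condZ p x w := hsum.symm
      exact_mod_cast this

/-- Among all factorized pmfs `q = ∏ j, q j` on `Z = Z_1 × ⋯ × Z_n`, the expected
KL divergence `∑ x, p_X x * KL(p(·|x) ‖ ∏ j, q j)` is minimized by taking each `q j`
to be the `j`-th marginal of the `Z`-marginal of the joint pmf `p`. -/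
theorem expected_klDiv_factorized_min
    {X : Type*} [Fintype X] {n : ℕ} {Z : Fin n → Type*}
    [∀ j, Fintype (Z j)] [∀ j, DecidableEq (Z j)]
    (p : X × (∀ j, Z j) → ℝ) (hp : IsPMF p)
    (q : ∀ j, Z j → ℝ) (hq : ∀ j, IsPMF (q j)) :
    ∑ x, (margX p x : EReal) *
        klDiv (condZ p x) (fun z => ∏ j, margJ (margZ p) j (z j)) ≤
      ∑ x, (margX p x : EReal) * klDiv (condZ p x) (fun z => ∏ j, q j (z j)) := by
  obtain ⟨hp0, hp1⟩ := hp
  set m : ∀ j, Z j → ℝ := fun j => margJ (margZ p) j with hm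
  have hmZ0 : ∀ z, 0 ≤ margZ p z := fun z => Finset.sum_nonneg fun _ _ => hp0 _
  have hmX0 : ∀ x, 0 ≤ margX p x := fun x => Finset.sum_nonneg fun _ _ => hp0 _
  have hpmX : ∀ x z, p (x, z) ≤ margX p x := fun x z =>
    Finset.single_le_sum (fun z' _ => hp0 (x, z')) (Finset.mem_univ z)
  have hpmZ : ∀ x z, p (x, z) ≤ margZ p z := fun x z =>
    Finset.single_le_sum (fun x' _ => hp0 (x', z)) (Finset.mem_univ x)
  have hmj0 : ∀ j w, 0 ≤ m j w := fun j w =>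
    Finset.sum_nonneg fun z _ => by split_ifs; exacts [hmZ0 z, le_refl 0]
  have hmjge : ∀ j (z : ∀ j, Z j), margZ p z ≤ m j (z j) := by
    intro j z
    have := Finset.single_le_sum
      (f := fun z' : ∀ j, Z j => if z' j = z j then margZ p z' else 0)
      (fun z' _ => by split_ifs; exacts [hmZ0 z', le_refl 0]) (Finset.mem_univ z)
    simpa [hm, margJ] using this
  have hsumZ : ∑ z, margZ p z = 1 := by
    calc ∑ z, margZ p z = ∑ z, ∑ x, p (x, z) := rfl
    _ = ∑ x, ∑ z, p (x, z) := Finset.sum_comm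
    _ = 1 := by rw [← Fintype.sum_prod_type]; exact hp1
  have hmjsum : ∀ j, ∑ w, m j w = 1 := by
    intro j
    calc ∑ w, m j w = ∑ w, ∑ z : ∀ j, Z j, if z j = w then margZ p z else 0 := rfl
    _ = ∑ z : ∀ j, Z j, ∑ w, if z j = w then margZ p z else 0 := Finset.sum_comm
    _ = ∑ z, margZ p z := by
        refine Finset.sum_congr rfl fun z _ => ?_
        rw [Finset.sum_ite_eq]
        simp
    _ = 1 := hsumZ
  have hprod_sum : ∀ (r : ∀ j, Z j → ℝ), (∀ j, ∑ w, r j w = 1) →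
      ∑ z : ∀ j, Z j, ∏ j, r j (z j) = 1 := by
    intro r hr
    rw [← Fintype.piFinset_univ, ← Finset.prod_univ_sum]
    simp [hr]
  have hQsum : ∑ z : ∀ j, Z j, ∏ j, q j (z j) = 1 := hprod_sum q fun j => (hq j).2
  have hMsum : ∑ z : ∀ j, Z j, ∏ j, m j (z j) = 1 := hprod_sum m hmjsum
  have hQ0 : ∀ z : ∀ j, Z j, 0 ≤ ∏ j, q j (z j) := fun z =>
    Finset.prod_nonneg fun j _ => (hq j).1 _
  have hM0 : ∀ z : ∀ j, Z j, 0 ≤ ∏ j, m j (z j) := fun z =>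
    Finset.prod_nonneg fun j _ => hmj0 j _
  by_cases hT : ∃ z : ∀ j, Z j, 0 < margZ p z ∧ (∏ j, q j (z j)) = 0
  · -- the right-hand side is `⊤`
    obtain ⟨z0, hz0, hQz0⟩ := hT
    have hx0 : ∃ x, 0 < p (x, z0) := by
      by_contra hcon
      push_neg at hcon
      have : margZ p z0 ≤ 0 := Finset.sum_nonpos fun x _ => hcon x
      linarith
    obtain ⟨x0, hpz⟩ := hx0
    have hX0 : 0 < margX p x0 := lt_of_lt_of_le hpz (hpmX x0 z0)
    have hkl : klDiv (condZ p x0) (fun z => ∏ j, q j (z j)) = ⊤ := by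
      rw [klDiv, if_pos]
      exact ⟨z0, div_pos hpz hX0, hQz0⟩
    have hterm : (margX p x0 : EReal) * klDiv (condZ p x0) (fun z => ∏ j, q j (z j)) = ⊤ := by
      rw [hkl]
      exact EReal.coe_mul_top_of_pos hX0
    have htop : (⊤ : EReal) ≤
        ∑ x, (margX p x : EReal) * klDiv (condZ p x) (fun z => ∏ j, q j (z j)) := by
      rw [← hterm]
      exact Finset.single_le_sum
        (fun x _ => term_nonneg p hp0 _ hQ0 hQsum.le x) (Finset.mem_univ x0)
    exact le_trans le_top htop
  · push_neg at hT
    have hQpos : ∀ z : ∀ j, Z j, 0 < margZ p z → 0 < ∏ j, q j (z j) := fun z hz =>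
      (hQ0 z).lt_of_ne' (hT z hz)
    have hMpos : ∀ z : ∀ j, Z j, 0 < margZ p z → 0 < ∏ j, m j (z j) := fun z hz =>
      Finset.prod_pos fun j _ => lt_of_lt_of_le hz (hmjge j z)
    have hppos : ∀ x (z : ∀ j, Z j), 0 < condZ p x z → 0 < p (x, z) := by
      intro x z hz
      by_contra hc
      push_neg at hc
      have h0 : p (x, z) = 0 := le_antisymm hc (hp0 _)
      rw [condZ] at hz
      simp [h0] at hz
    have hfin : ∀ (G : (∀ j, Z j) → ℝ), (∀ z, 0 < margZ p z → 0 < G z) → ∀ x,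
        klDiv (condZ p x) G
          = ((∑ z, condZ p x z * Real.log (condZ p x z / G z) : ℝ) : EReal) := by
      intro G hG x
      rw [klDiv, if_neg]
      rintro ⟨z, hz, hGz⟩
      exact absurd hGz (hG z (lt_of_lt_of_le (hppos x z hz) (hpmZ x z))).ne'
    set A : X → ℝ := fun x =>
      ∑ z, condZ p x z * Real.log (condZ p x z / ∏ j, m j (z j)) with hA
    set B : X → ℝ := fun x =>
      ∑ z, condZ p x z * Real.log (condZ p x z / ∏ j, q j (z j)) with hB
    have hLHS : ∑ x, (margX p x : EReal) *
        klDiv (condZ p x) (fun z => ∏ j, m j (z j))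
          = ((∑ x, margX p x * A x : ℝ) : EReal) := by
      rw [ereal_coe_sum]
      refine Finset.sum_congr rfl fun x _ => ?_
      rw [hfin _ hMpos x, ← EReal.coe_mul]
    have hRHS : ∑ x, (margX p x : EReal) *
        klDiv (condZ p x) (fun z => ∏ j, q j (z j))
          = ((∑ x, margX p x * B x : ℝ) : EReal) := by
      rw [ereal_coe_sum]
      refine Finset.sum_congr rfl fun x _ => ?_
      rw [hfin _ hQpos x, ← EReal.coe_mul]
    rw [hLHS, hRHS, EReal.coe_le_coe_iff]
    -- now a purely real inequality
    have hmq : ∀ j w, 0 < m j w → 0 < q j w := by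
      intro j w hw
      have hex : ∃ z : ∀ j, Z j, 0 < (if z j = w then margZ p z else 0) := by
        by_contra hcon
        push_neg at hcon
        have : m j w ≤ 0 := Finset.sum_nonpos fun z _ => hcon z
        linarith
      obtain ⟨z, hz⟩ := hex
      have hzw : z j = w := by
        by_contra h'
        simp [h'] at hz
      rw [if_pos hzw] at hz
      have hne : q j (z j) ≠ 0 :=
        Finset.prod_ne_zero_iff.mp (hQpos z hz).ne' j (Finset.mem_univ j)
      rw [hzw] at hne
      exact ((hq j).1 w).lt_of_ne' hne
    have hdiff : ∀ x (z : ∀ j, Z j),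
        margX p x * (condZ p x z * Real.log (condZ p x z / ∏ j, q j (z j)))
          - margX p x * (condZ p x z * Real.log (condZ p x z / ∏ j, m j (z j)))
        = p (x, z) * (Real.log (∏ j, m j (z j)) - Real.log (∏ j, q j (z j))) := by
      intro x z
      rcases (hp0 (x, z)).eq_or_lt with h | h
      · have hc : condZ p x z = 0 := by rw [condZ, ← h, zero_div]
        rw [hc, ← h]
        ring
      · have hX : 0 < margX p x := lt_of_lt_of_le h (hpmX x z)
        have hZ : 0 < margZ p z := lt_of_lt_of_le h (hpmZ x z)
        have hc : 0 < condZ p x z := div_pos h hX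
        have hQz := hQpos z hZ
        have hMz := hMpos z hZ
        have e1 : margX p x * condZ p x z = p (x, z) := by
          rw [condZ]
          field_simp
        rw [Real.log_div hc.ne' hQz.ne', Real.log_div hc.ne' hMz.ne']
        have e2 : margX p x * (condZ p x z * (Real.log (condZ p x z) - Real.log (∏ j, q j (z j))))
            - margX p x * (condZ p x z * (Real.log (condZ p x z) - Real.log (∏ j, m j (z j))))
            = (margX p x * condZ p x z) *
              (Real.log (∏ j, m j (z j)) - Real.log (∏ j, q j (z j))) := by ring
        rw [e2, e1]
    have key : ∑ x, margX p x * B x - ∑ x, margX p x * A x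
        = ∑ j, ∑ w, m j w * Real.log (m j w / q j w) := by
      calc ∑ x, margX p x * B x - ∑ x, margX p x * A x
          = ∑ x, (margX p x * B x - margX p x * A x) := (Finset.sum_sub_distrib _ _).symm
        _ = ∑ x, ∑ z : ∀ j, Z j,
              p (x, z) * (Real.log (∏ j, m j (z j)) - Real.log (∏ j, q j (z j))) := by
            refine Finset.sum_congr rfl fun x _ => ?_
            rw [hA, hB, Finset.mul_sum, Finset.mul_sum, ← Finset.sum_sub_distrib]
            exact Finset.sum_congr rfl fun z _ => hdiff x z
        _ = ∑ z : ∀ j, Z j, ∑ x,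
              p (x, z) * (Real.log (∏ j, m j (z j)) - Real.log (∏ j, q j (z j))) :=
            Finset.sum_comm
        _ = ∑ z : ∀ j, Z j,
              margZ p z * (Real.log (∏ j, m j (z j)) - Real.log (∏ j, q j (z j))) := by
            refine Finset.sum_congr rfl fun z _ => ?_
            rw [← Finset.sum_mul]
            rfl
        _ = ∑ z : ∀ j, Z j, ∑ j,
              margZ p z * (Real.log (m j (z j)) - Real.log (q j (z j))) := by
            refine Finset.sum_congr rfl fun z _ => ?_
            rcases (hmZ0 z).eq_or_lt with h | h
            · rw [← h]
              simp
            · have hlogM : Real.log (∏ j, m j (z j)) = ∑ j, Real.log (m j (z j)) :=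
                Real.log_prod fun j _ => (lt_of_lt_of_le h (hmjge j z)).ne'
              have hlogQ : Real.log (∏ j, q j (z j)) = ∑ j, Real.log (q j (z j)) :=
                Real.log_prod fun j _ =>
                  Finset.prod_ne_zero_iff.mp (hQpos z h).ne' j (Finset.mem_univ j)
              rw [hlogM, hlogQ, ← Finset.sum_sub_distrib, Finset.mul_sum]
        _ = ∑ j, ∑ z : ∀ j, Z j,
              margZ p z * (Real.log (m j (z j)) - Real.log (q j (z j))) := Finset.sum_comm
        _ = ∑ j, ∑ w, m j w * (Real.log (m j w) - Real.log (q j w)) := by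
            refine Finset.sum_congr rfl fun j _ => ?_
            calc ∑ z : ∀ j, Z j, margZ p z * (Real.log (m j (z j)) - Real.log (q j (z j)))
                = ∑ z : ∀ j, Z j, ∑ w, if z j = w then
                    margZ p z * (Real.log (m j w) - Real.log (q j w)) else 0 := by
                  refine Finset.sum_congr rfl fun z _ => ?_
                  rw [Finset.sum_ite_eq]
                  simp
              _ = ∑ w, ∑ z : ∀ j, Z j, if z j = w then
                    margZ p z * (Real.log (m j w) - Real.log (q j w)) else 0 :=
                  Finset.sum_comm
              _ = ∑ w, m j w * (Real.log (m j w) - Real.log (q j w)) := by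
                  refine Finset.sum_congr rfl fun w _ => ?_
                  rw [show m j w = ∑ z : ∀ j, Z j, if z j = w then margZ p z else 0 from rfl,
                    Finset.sum_mul]
                  refine Finset.sum_congr rfl fun z _ => ?_
                  rw [ite_mul, zero_mul]
        _ = ∑ j, ∑ w, m j w * Real.log (m j w / q j w) := by
            refine Finset.sum_congr rfl fun j _ => Finset.sum_congr rfl fun w _ => ?_
            rcases (hmj0 j w).eq_or_lt with h | h
            · rw [← h, zero_mul, zero_mul]
            · rw [Real.log_div h.ne' (hmq j w h).ne']
    have hpos : 0 ≤ ∑ j, ∑ w, m j w * Real.log (m j w / q j w) :=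
      Finset.sum_nonneg fun j _ =>
        gibbs (m j) (q j) (hmj0 j) (hq j).1 (by rw [(hq j).2, hmjsum j]) (hmq j)
    linarith [key, hpos]
end

section
/- Let X be a finite type, let Z = Z_1 × … × Z_n be a product of finite types, and fix a family P of Markov kernels from X to Z (i.e., for each x ∈ X a pmf p(·|x) on Z) together with a fixed pmf p_X on X. Let F : P → ℝ be any function and β ≥ 0. Then the infimum over pairs (p, q), where p ∈ P and q ranges over all factorized pmfs q(z) = ∏_{j=1}^n q_j(z_j) on Z, of F(p) + β · Σ_x p_X(x) · KL(p(·|x) ‖ q), equals the infimum over p ∈ P alone of F(p) + β · ( I_p(x; z) + TC_p(z) ), where I_p(x; z) and TC_p(z) are the mutual information and total correlation computed from the joint pmf p_X(x) · p(z|x). Moreover, for each fixed p the inner infimum over q is attained at q_j equal to the j-th marginal of the Z-marginal of this joint pmf. -/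
open scoped BigOperators

/-- Mutual information `I(x; z) = ∑ x, p_X x * KL(p(·|x) ‖ p_Z)` of a joint pmf on `X × Z`. -/
noncomputable def mutualInfo {X Z : Type*} [Fintype X] [Fintype Z] (p : X × Z → ℝ) : EReal :=
  ∑ x, (margX p x : EReal) * klDiv (condZ p x) (margZ p)

/-- Total correlation `TC(r) = KL(r ‖ ∏ j, r_j)` of a pmf on a finite product. -/
noncomputable def totalCorrelation {n : ℕ} {Z : Fin n → Type*} [∀ j, Fintype (Z j)]
    [∀ j, DecidableEq (Z j)] (r : (∀ j, Z j) → ℝ) : EReal :=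
  klDiv r (fun z => ∏ j, margJ r j (z j))


namespace Aux

noncomputable def coeHom : ℝ →+ EReal := ⟨⟨(↑· : ℝ → EReal), EReal.coe_zero⟩, EReal.coe_add⟩

lemma coe_sum {α : Type*} (s : Finset α) (f : α → ℝ) :
    ((∑ a ∈ s, f a : ℝ) : EReal) = ∑ a ∈ s, (f a : EReal) := map_sum coeHom f s

variable {Ω : Type*} [Fintype Ω]

lemma klDiv_ne_bot (p q : Ω → ℝ) : klDiv p q ≠ ⊥ := by
  unfold klDiv; split
  · simp
  · simp

lemma klDiv_eq_coe_of {p q : Ω → ℝ} (h : ∀ ω, 0 < p ω → q ω ≠ 0) :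
    klDiv p q = ((∑ ω, p ω * Real.log (p ω / q ω) : ℝ) : EReal) := by
  unfold klDiv
  rw [if_neg]
  push_neg
  intro ω hω
  exact h ω hω

lemma coe_mul_klDiv_ne_bot {a : ℝ} (ha : 0 ≤ a) (p q : Ω → ℝ) :
    (a : EReal) * klDiv p q ≠ ⊥ := by
  unfold klDiv; split
  · rcases ha.eq_or_lt with h | h
    · rw [← h]; simp
    · rw [EReal.coe_mul_top_of_pos h]; simp
  · rw [← EReal.coe_mul]; exact EReal.coe_ne_bot _

lemma klDiv_nonneg {p q : Ω → ℝ} (hp : IsPMF p) (hq0 : ∀ ω, 0 ≤ q ω)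
    (hq1 : ∑ ω, q ω ≤ 1) : 0 ≤ klDiv p q := by
  unfold klDiv; split
  · exact le_top
  · next hT =>
    push_neg at hT
    rw [← EReal.coe_zero, EReal.coe_le_coe_iff]
    have h1 : ∀ ω, p ω - q ω ≤ p ω * Real.log (p ω / q ω) := by
      intro ω
      rcases (hp.1 ω).eq_or_lt with h | h
      · rw [← h]; simpa using hq0 ω
      · have hqω : 0 < q ω := (hq0 ω).lt_of_ne' (hT ω h)
        have hlog := Real.log_le_sub_one_of_pos (div_pos hqω h)
        have e1 : Real.log (q ω / p ω) = Real.log (q ω) - Real.log (p ω) :=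
          Real.log_div hqω.ne' h.ne'
        have e2 : Real.log (p ω / q ω) = Real.log (p ω) - Real.log (q ω) :=
          Real.log_div h.ne' hqω.ne'
        have e3 : p ω * (q ω / p ω) = q ω := mul_div_cancel₀ _ h.ne'
        nlinarith [mul_le_mul_of_nonneg_left hlog (hp.1 ω)]
    calc (0:ℝ) = 1 - 1 := by ring
    _ ≤ ∑ ω, p ω - ∑ ω, q ω := by rw [hp.2]; linarith
    _ = ∑ ω, (p ω - q ω) := (Finset.sum_sub_distrib _ _).symm
    _ ≤ _ := Finset.sum_le_sum fun ω _ => h1 ω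

lemma klDiv_self {p : Ω → ℝ} (hp : ∀ ω, 0 ≤ p ω) : klDiv p p = 0 := by
  rw [klDiv_eq_coe_of fun ω h => h.ne']
  norm_cast
  refine Finset.sum_eq_zero fun ω _ => ?_
  rcases (hp ω).eq_or_lt with h | h
  · rw [← h]; ring
  · rw [div_self h.ne', Real.log_one, mul_zero]

lemma sum_eq_top {α : Type*} {s : Finset α} {f : α → EReal}
    (h0 : ∀ a ∈ s, 0 ≤ f a) {a0 : α} (ha0 : a0 ∈ s) (ht : f a0 = ⊤) :
    ∑ a ∈ s, f a = ⊤ := by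
  classical
  rw [← Finset.add_sum_erase s f ha0, ht, EReal.top_add_of_ne_bot]
  exact (((bot_lt_iff_ne_bot.2 (by simp)).trans_le le_rfl : (⊥:EReal) < 0).trans_le (Finset.sum_nonneg fun a ha =>
    h0 a (Finset.mem_of_mem_erase ha))).ne'

lemma sum_ne_bot {α : Type*} {s : Finset α} {f : α → EReal}
    (h : ∀ a ∈ s, f a ≠ ⊥) : ∑ a ∈ s, f a ≠ ⊥ := by
  classical
  induction s using Finset.induction_on with
  | empty => simp
  | @insert a s' hx ih =>
    rw [Finset.sum_insert hx, Ne, EReal.add_eq_bot_iff]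
    push_neg
    exact ⟨h a (Finset.mem_insert_self a s'), ih fun b hb => h b (Finset.mem_insert_of_mem hb)⟩



variable {n : ℕ} {Z : Fin n → Type*} [∀ j, Fintype (Z j)] [∀ j, DecidableEq (Z j)]

lemma margJ_mul_sum (r : (∀ j, Z j) → ℝ) (j : Fin n) (f : Z j → ℝ) :
    ∑ zj, margJ r j zj * f zj = ∑ z, r z * f (z j) := by
  unfold margJ
  simp_rw [Finset.sum_mul, ite_mul, zero_mul]
  rw [Finset.sum_comm]
  refine Finset.sum_congr rfl fun z _ => ?_
  simp

lemma margJ_nonneg {r : (∀ j, Z j) → ℝ} (hr : ∀ z, 0 ≤ r z) (j : Fin n) (zj : Z j) :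
    0 ≤ margJ r j zj := by
  refine Finset.sum_nonneg fun z _ => ?_
  split
  · exact hr z
  · exact le_rfl

lemma sum_margJ (r : (∀ j, Z j) → ℝ) (j : Fin n) : ∑ zj, margJ r j zj = ∑ z, r z := by
  have := margJ_mul_sum r j (fun _ => 1)
  simpa using this

lemma le_margJ {r : (∀ j, Z j) → ℝ} (hr : ∀ z, 0 ≤ r z) (j : Fin n) (z : ∀ j, Z j) :
    r z ≤ margJ r j (z j) := by
  have h1 : ∀ z' : ∀ j, Z j, z' ∈ Finset.univ →
      (0:ℝ) ≤ if z' j = z j then r z' else 0 := by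
    intro z' _
    split
    · exact hr z'
    · exact le_rfl
  have := Finset.single_le_sum (f := fun z' : ∀ j, Z j => if z' j = z j then r z' else 0)
    h1 (Finset.mem_univ z)
  exact (by simpa using this : r z ≤ ∑ x : ∀ j, Z j, if x j = z j then r x else 0)

lemma margJ_pos_elim {r : (∀ j, Z j) → ℝ} {j : Fin n} {zj : Z j}
    (h : 0 < margJ r j zj) : ∃ z, z j = zj ∧ 0 < r z := by
  unfold margJ at h
  have h2 : ∑ z : ∀ j, Z j, (0:ℝ) < ∑ z : ∀ j, Z j, if z j = zj then r z else 0 := by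
    simpa using h
  obtain ⟨z, _, hz⟩ := Finset.exists_lt_of_sum_lt h2
  split at hz
  · exact ⟨z, by assumption, hz⟩
  · exact absurd hz (lt_irrefl 0)


variable {X : Type*} [Fintype X] {n : ℕ} {Z : Fin n → Type*}
  [∀ j, Fintype (Z j)] [∀ j, DecidableEq (Z j)]

lemma margZ_joint_pmf (p : X → (∀ j, Z j) → ℝ) (hp : ∀ x, IsPMF (p x))
    (pX : X → ℝ) (hpX : IsPMF pX) :
    IsPMF (margZ (fun xz => pX xz.1 * p xz.1 xz.2)) := by
  constructor
  · intro z
    exact Finset.sum_nonneg fun x _ => mul_nonneg (hpX.1 x) ((hp x).1 z)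
  · show ∑ z : ∀ j, Z j, ∑ x, pX x * p x z = 1
    rw [Finset.sum_comm]
    have : ∀ x, ∑ z : ∀ j, Z j, pX x * p x z = pX x := by
      intro x
      rw [← Finset.mul_sum, (hp x).2, mul_one]
    rw [Finset.sum_congr rfl fun x _ => this x, hpX.2]

lemma margJ_pmf {r : (∀ j, Z j) → ℝ} (hr : IsPMF r) (j : Fin n) : IsPMF (margJ r j) :=
  ⟨margJ_nonneg hr.1 j, by rw [sum_margJ]; exact hr.2⟩

lemma main (p : X → (∀ j, Z j) → ℝ) (hp : ∀ x, IsPMF (p x)) (pX : X → ℝ) (hpX : IsPMF pX)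
    (q : ∀ j, Z j → ℝ) (hq : ∀ j, IsPMF (q j)) :
    ∑ x, (pX x : EReal) * klDiv (p x) (fun z => ∏ j, q j (z j))
      = mutualInfo (fun xz => pX xz.1 * p xz.1 xz.2)
        + totalCorrelation (margZ (fun xz => pX xz.1 * p xz.1 xz.2))
        + ∑ j, klDiv (margJ (margZ (fun xz => pX xz.1 * p xz.1 xz.2)) j) (q j) := by
  classical
  set joint : X × (∀ j, Z j) → ℝ := fun xz => pX xz.1 * p xz.1 xz.2 with hjoint
  set r : (∀ j, Z j) → ℝ := margZ joint with hrdef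
  have hr_eq : ∀ z, r z = ∑ x, pX x * p x z := fun z => rfl
  have hr0 : ∀ z, 0 ≤ r z := fun z =>
    Finset.sum_nonneg fun x _ => mul_nonneg (hpX.1 x) ((hp x).1 z)
  have hle : ∀ x z, pX x * p x z ≤ r z := by
    intro x z
    rw [hr_eq]
    exact Finset.single_le_sum (fun x' _ => mul_nonneg (hpX.1 x') ((hp x').1 z))
      (Finset.mem_univ x)
  have hrpos : ∀ x z, 0 < pX x → 0 < p x z → 0 < r z := fun x z hx hz =>
    lt_of_lt_of_le (mul_pos hx hz) (hle x z)
  have hrpmf : IsPMF r := margZ_joint_pmf p hp pX hpX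
  have hrjpmf : ∀ j, IsPMF (margJ r j) := fun j => margJ_pmf hrpmf j
  have hmargX : margX joint = pX := by
    funext x
    show ∑ z : ∀ j, Z j, pX x * p x z = pX x
    rw [← Finset.mul_sum, (hp x).2, mul_one]
  have hqz : ∀ z : ∀ j, Z j, 0 ≤ ∏ j, q j (z j) :=
    fun z => Finset.prod_nonneg fun j _ => (hq j).1 _
  have hq_sum : ∑ z : ∀ j, Z j, ∏ j, q j (z j) = 1 := by
    rw [← Fintype.piFinset_univ, ← Finset.prod_univ_sum]
    exact Finset.prod_eq_one fun j _ => (hq j).2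
  by_cases hT : ∃ z, 0 < r z ∧ ∃ j, q j (z j) = 0
  · obtain ⟨z0, hz0, j0, hq0⟩ := hT
    have hx0 : ∃ x, 0 < pX x * p x z0 := by
      by_contra hcon
      push_neg at hcon
      have h2 : r z0 ≤ 0 := by
        rw [hr_eq]
        exact Finset.sum_nonpos fun x _ => hcon x
      exact absurd hz0 (not_lt.2 h2)
    obtain ⟨x0, hx0⟩ := hx0
    have hpx0 : 0 < pX x0 := by
      rcases (hpX.1 x0).eq_or_lt with hcase | hcase
      · rw [← hcase] at hx0; simp at hx0
      · exact hcase
    have hpz0 : 0 < p x0 z0 := by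
      rcases ((hp x0).1 z0).eq_or_lt with hcase | hcase
      · rw [← hcase] at hx0; simp at hx0
      · exact hcase
    have hklt : klDiv (p x0) (fun z => ∏ j, q j (z j)) = ⊤ := by
      unfold klDiv
      rw [if_pos]
      exact ⟨z0, hpz0, Finset.prod_eq_zero (Finset.mem_univ j0) hq0⟩
    have hLHS : ∑ x, (pX x : EReal) * klDiv (p x) (fun z => ∏ j, q j (z j)) = ⊤ := by
      refine sum_eq_top (fun x _ => mul_nonneg (by exact_mod_cast hpX.1 x)
        (klDiv_nonneg (hp x) hqz (le_of_eq hq_sum))) (Finset.mem_univ x0) ?_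
      rw [hklt, EReal.coe_mul_top_of_pos hpx0]
    have hj0 : klDiv (margJ r j0) (q j0) = ⊤ := by
      unfold klDiv
      rw [if_pos]
      exact ⟨z0 j0, lt_of_lt_of_le hz0 (le_margJ hr0 j0 z0), hq0⟩
    have hsumj : ∑ j, klDiv (margJ r j) (q j) = ⊤ :=
      sum_eq_top (fun j _ => klDiv_nonneg (hrjpmf j) (hq j).1 (le_of_eq (hq j).2))
        (Finset.mem_univ j0) hj0
    have hMI : mutualInfo joint ≠ ⊥ := by
      unfold mutualInfo
      refine sum_ne_bot fun x _ => coe_mul_klDiv_ne_bot ?_ _ _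
      rw [hmargX]
      exact hpX.1 x
    have hTC : totalCorrelation r ≠ ⊥ := by
      unfold totalCorrelation
      exact klDiv_ne_bot _ _
    rw [hLHS, hsumj, EReal.add_top_of_ne_bot]
    rw [Ne, EReal.add_eq_bot_iff]
    push_neg
    exact ⟨hMI, hTC⟩
  · push_neg at hT
    -- hT : ∀ z, 0 < r z → ∀ j, q j (z j) ≠ 0
    have key : ∀ x z, pX x * (p x z * Real.log (p x z / ∏ j, q j (z j)))
        = pX x * (p x z * Real.log (p x z / r z))
          + (pX x * p x z) * Real.log (r z / ∏ j, margJ r j (z j))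
          + (pX x * p x z) * ∑ j, Real.log (margJ r j (z j) / q j (z j)) := by
      intro x z
      rcases (hpX.1 x).eq_or_lt with hx | hx
      · rw [← hx]; ring
      rcases ((hp x).1 z).eq_or_lt with hz | hz
      · rw [← hz]; ring
      have hrz : 0 < r z := hrpos x z hx hz
      have hqj : ∀ j, q j (z j) ≠ 0 := hT z hrz
      have hrj : ∀ j, 0 < margJ r j (z j) := fun j => lt_of_lt_of_le hrz (le_margJ hr0 j z)
      have hprodq : (∏ j, q j (z j)) ≠ 0 := Finset.prod_ne_zero_iff.2 fun j _ => hqj j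
      have hprodrj : (∏ j, margJ r j (z j)) ≠ 0 :=
        Finset.prod_ne_zero_iff.2 fun j _ => (hrj j).ne'
      have e1 : Real.log (p x z / ∏ j, q j (z j))
          = Real.log (p x z) - ∑ j, Real.log (q j (z j)) := by
        rw [Real.log_div hz.ne' hprodq, Real.log_prod fun j _ => hqj j]
      have e2 : Real.log (p x z / r z) = Real.log (p x z) - Real.log (r z) :=
        Real.log_div hz.ne' hrz.ne'
      have e3 : Real.log (r z / ∏ j, margJ r j (z j))
          = Real.log (r z) - ∑ j, Real.log (margJ r j (z j)) := by
        rw [Real.log_div hrz.ne' hprodrj, Real.log_prod fun j _ => (hrj j).ne']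
      have e4 : ∑ j, Real.log (margJ r j (z j) / q j (z j))
          = ∑ j, Real.log (margJ r j (z j)) - ∑ j, Real.log (q j (z j)) := by
        rw [← Finset.sum_sub_distrib]
        exact Finset.sum_congr rfl fun j _ => Real.log_div (hrj j).ne' (hqj j)
      rw [e1, e2, e3, e4]
      ring
    have sum_key : ∑ x, pX x * ∑ z, p x z * Real.log (p x z / ∏ j, q j (z j))
        = (∑ x, pX x * ∑ z, p x z * Real.log (p x z / r z))
          + (∑ z, r z * Real.log (r z / ∏ j, margJ r j (z j)))
          + ∑ j, ∑ zj, margJ r j zj * Real.log (margJ r j zj / q j zj) := by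
      have t1 : ∀ x, pX x * ∑ z, p x z * Real.log (p x z / ∏ j, q j (z j))
          = pX x * ∑ z, p x z * Real.log (p x z / r z)
            + ((∑ z, (pX x * p x z) * Real.log (r z / ∏ j, margJ r j (z j)))
              + ∑ z, (pX x * p x z) * ∑ j, Real.log (margJ r j (z j) / q j (z j))) := by
        intro x
        calc pX x * ∑ z, p x z * Real.log (p x z / ∏ j, q j (z j))
            = ∑ z, pX x * (p x z * Real.log (p x z / ∏ j, q j (z j))) := Finset.mul_sum _ _ _
          _ = ∑ z, (pX x * (p x z * Real.log (p x z / r z))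
                + ((pX x * p x z) * Real.log (r z / ∏ j, margJ r j (z j))
                  + (pX x * p x z) * ∑ j, Real.log (margJ r j (z j) / q j (z j)))) :=
              Finset.sum_congr rfl fun z _ => by rw [key x z]; ring
          _ = _ := by
              rw [Finset.sum_add_distrib, Finset.sum_add_distrib, ← Finset.mul_sum]
      rw [Finset.sum_congr rfl fun x _ => t1 x, Finset.sum_add_distrib,
        Finset.sum_add_distrib]
      have t2 : ∑ x, ∑ z, (pX x * p x z) * Real.log (r z / ∏ j, margJ r j (z j))
          = ∑ z, r z * Real.log (r z / ∏ j, margJ r j (z j)) := by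
        rw [Finset.sum_comm]
        refine Finset.sum_congr rfl fun z _ => ?_
        rw [← Finset.sum_mul, ← hr_eq]
      have t3 : ∑ x, ∑ z, (pX x * p x z) * ∑ j, Real.log (margJ r j (z j) / q j (z j))
          = ∑ j, ∑ zj, margJ r j zj * Real.log (margJ r j zj / q j zj) := by
        rw [Finset.sum_comm]
        have t3a : ∀ z, ∑ x, (pX x * p x z) * ∑ j, Real.log (margJ r j (z j) / q j (z j))
            = r z * ∑ j, Real.log (margJ r j (z j) / q j (z j)) := by
          intro z
          rw [← Finset.sum_mul, ← hr_eq]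
        rw [Finset.sum_congr rfl fun z _ => t3a z]
        have t3b : ∀ z, r z * ∑ j, Real.log (margJ r j (z j) / q j (z j))
            = ∑ j, r z * Real.log (margJ r j (z j) / q j (z j)) := fun z =>
          Finset.mul_sum _ _ _
        rw [Finset.sum_congr rfl fun z _ => t3b z, Finset.sum_comm]
        exact Finset.sum_congr rfl fun j _ =>
          (margJ_mul_sum r j (fun zj => Real.log (margJ r j zj / q j zj))).symm
      rw [t2, t3]
      ring
    have ha : ∀ x, (pX x : EReal) * klDiv (p x) (fun z => ∏ j, q j (z j))
        = ((pX x * ∑ z, p x z * Real.log (p x z / ∏ j, q j (z j)) : ℝ) : EReal) := by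
      intro x
      by_cases hx : pX x = 0
      · simp [hx]
      · have hx' : 0 < pX x := (hpX.1 x).lt_of_ne' hx
        rw [klDiv_eq_coe_of (fun z hz =>
          Finset.prod_ne_zero_iff.2 fun j _ => hT z (hrpos x z hx' hz) j), ← EReal.coe_mul]
    have hb : mutualInfo joint
        = ((∑ x, pX x * ∑ z, p x z * Real.log (p x z / r z) : ℝ) : EReal) := by
      unfold mutualInfo
      rw [← hrdef, coe_sum]
      refine Finset.sum_congr rfl fun x _ => ?_
      rw [hmargX]
      by_cases hx : pX x = 0
      · simp [hx]
      · have hcond : condZ joint x = p x := by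
          funext z
          show joint (x, z) / margX joint x = p x z
          rw [hmargX]
          show (pX x * p x z) / pX x = p x z
          exact mul_div_cancel_left₀ _ hx
        rw [hcond, klDiv_eq_coe_of (fun z hz =>
          (hrpos x z ((hpX.1 x).lt_of_ne' hx) hz).ne'), ← EReal.coe_mul]
    have hc : totalCorrelation r
        = ((∑ z, r z * Real.log (r z / ∏ j, margJ r j (z j)) : ℝ) : EReal) := by
      unfold totalCorrelation
      rw [klDiv_eq_coe_of (fun z hz =>
        Finset.prod_ne_zero_iff.2 fun j _ => (lt_of_lt_of_le hz (le_margJ hr0 j z)).ne')]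
    have hd : ∀ j, klDiv (margJ r j) (q j)
        = ((∑ zj, margJ r j zj * Real.log (margJ r j zj / q j zj) : ℝ) : EReal) := by
      intro j
      refine klDiv_eq_coe_of fun zj hzj => ?_
      obtain ⟨z, hzjz, hz⟩ := margJ_pos_elim hzj
      rw [← hzjz]
      exact hT z hz j
    calc ∑ x, (pX x : EReal) * klDiv (p x) (fun z => ∏ j, q j (z j))
        = ∑ x, ((pX x * ∑ z, p x z * Real.log (p x z / ∏ j, q j (z j)) : ℝ) : EReal) :=
          Finset.sum_congr rfl fun x _ => ha x
      _ = ((∑ x, pX x * ∑ z, p x z * Real.log (p x z / ∏ j, q j (z j)) : ℝ) : EReal) :=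
          (coe_sum _ _).symm
      _ = _ := by
          rw [sum_key, hb, hc, Finset.sum_congr rfl fun j _ => hd j, ← coe_sum,
            ← EReal.coe_add, ← EReal.coe_add]

end Aux

set_option maxHeartbeats 1600000 in
/-- Fix a family `P` of Markov kernels `k i` from `X` to `Z = Z_1 × ⋯ × Z_n` (indexed by
`i : ι`), a pmf `p_X` on `X`, any function `F : ι → ℝ` and `β ≥ 0`.  Then the infimum over
pairs `(i, q)`, with `q` a factorized pmf on `Z`, of
`F i + β * ∑ x, p_X x * KL(k i x ‖ ∏ j, q j)` equals the infimum over `i` alone of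
`F i + β * (I(x; z) + TC(z))`, where `I` and `TC` are computed from the joint pmf
`p_X x * k i x z`; moreover, for each fixed `i` the inner infimum over `q` is attained at
`q j` equal to the `j`-th marginal of the `Z`-marginal of this joint pmf. -/
theorem iInf_factorized_eq_iInf_mutualInfo_add_totalCorrelation
    {X : Type*} [Fintype X] {n : ℕ} {Z : Fin n → Type*}
    [∀ j, Fintype (Z j)] [∀ j, DecidableEq (Z j)] {ι : Type*}
    (k : ι → X → (∀ j, Z j) → ℝ) (hk : ∀ i x, IsPMF (k i x))
    (pX : X → ℝ) (hpX : IsPMF pX) (F : ι → ℝ) (β : ℝ) (hβ : 0 ≤ β) :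
    ((⨅ (i : ι) (q : {q : ∀ j, Z j → ℝ // ∀ j, IsPMF (q j)}),
        (F i : EReal) +
          (β : EReal) * ∑ x, (pX x : EReal) * klDiv (k i x) (fun z => ∏ j, q.1 j (z j)))
      = ⨅ i : ι, (F i : EReal) +
          (β : EReal) * (mutualInfo (fun xz => pX xz.1 * k i xz.1 xz.2)
            + totalCorrelation (margZ (fun xz => pX xz.1 * k i xz.1 xz.2))))
    ∧ ∀ i : ι,
        (⨅ q : {q : ∀ j, Z j → ℝ // ∀ j, IsPMF (q j)},
          (F i : EReal) +
            (β : EReal) * ∑ x, (pX x : EReal) * klDiv (k i x) (fun z => ∏ j, q.1 j (z j)))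
        = (F i : EReal) + (β : EReal) * ∑ x, (pX x : EReal) *
            klDiv (k i x)
              (fun z => ∏ j, margJ (margZ (fun xz => pX xz.1 * k i xz.1 xz.2)) j (z j)) := by
  classical
  have key2 : ∀ i : ι,
      (∑ x, (pX x : EReal) * klDiv (k i x)
        (fun z => ∏ j, margJ (margZ (fun xz => pX xz.1 * k i xz.1 xz.2)) j (z j)))
      = mutualInfo (fun xz => pX xz.1 * k i xz.1 xz.2)
        + totalCorrelation (margZ (fun xz => pX xz.1 * k i xz.1 xz.2)) := by
    intro i
    have hrpmf := Aux.margZ_joint_pmf (k i) (hk i) pX hpX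
    rw [Aux.main (k i) (hk i) pX hpX _ (fun j => Aux.margJ_pmf hrpmf j)]
    rw [Finset.sum_eq_zero fun j _ => Aux.klDiv_self (Aux.margJ_nonneg hrpmf.1 j), add_zero]
  have part2 : ∀ i : ι,
      (⨅ q : {q : ∀ j, Z j → ℝ // ∀ j, IsPMF (q j)},
        (F i : EReal) +
          (β : EReal) * ∑ x, (pX x : EReal) * klDiv (k i x) (fun z => ∏ j, q.1 j (z j)))
      = (F i : EReal) + (β : EReal) * ∑ x, (pX x : EReal) *
          klDiv (k i x)
            (fun z => ∏ j, margJ (margZ (fun xz => pX xz.1 * k i xz.1 xz.2)) j (z j)) := by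
    intro i
    have hrpmf := Aux.margZ_joint_pmf (k i) (hk i) pX hpX
    have hle := iInf_le (fun q : {q : ∀ j, Z j → ℝ // ∀ j, IsPMF (q j)} =>
        (F i : EReal) +
          (β : EReal) * ∑ x, (pX x : EReal) * klDiv (k i x) (fun z => ∏ j, q.1 j (z j)))
      ⟨fun j => margJ (margZ (fun xz => pX xz.1 * k i xz.1 xz.2)) j,
        fun j => Aux.margJ_pmf hrpmf j⟩
    refine le_antisymm (hle.trans (le_of_eq rfl)) ?_
    refine le_iInf fun q => ?_
    refine add_le_add_right (mul_le_mul_of_nonneg_left ?_ (by exact_mod_cast hβ)) _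
    rw [key2 i, Aux.main (k i) (hk i) pX hpX q.1 q.2]
    refine le_add_of_nonneg_right (Finset.sum_nonneg fun j _ =>
      Aux.klDiv_nonneg (Aux.margJ_pmf hrpmf j) (q.2 j).1 (le_of_eq (q.2 j).2))
  refine ⟨?_, part2⟩
  refine iInf_congr fun i => ?_
  rw [part2 i, key2 i]
end

section
/- Let X be a finite type, let Z = Z_1 × … × Z_n be a product of finite types, and fix a family P of Markov kernels p(·|x) from X to Z, a pmf p_X on X supported on training samples x_1, …, x_N with equal weights 1/N, a fixed loss term L(p) = (1/N) Σ_{i=1}^N E_{z ∼ p(·|x_i)}[ ℓ_i(z) ] for given functions ℓ_i : Z → ℝ, and β ≥ 0. Then the minimization over p ∈ P of L(p) + β · (1/N) Σ_{i=1}^N { KL(p(·|x_i) ‖ p_Z) + TC(p_Z) }, where p_Z is the Z-marginal of the joint pmf determined by p_X and p, has the same infimum value as the minimization over pairs (p, q) with p ∈ P and q a factorized pmf ∏_{j=1}^n q_j on Z, of L(p) + β · (1/N) Σ_{i=1}^N KL(p(·|x_i) ‖ ∏_{j=1}^n q_j). -/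
open scoped BigOperators

/-! ### Auxiliary lemmas -/

lemma aux_coe_sum {α : Type*} (s : Finset α) (f : α → ℝ) :
    ((∑ a ∈ s, f a : ℝ) : EReal) = ∑ a ∈ s, ((f a : ℝ) : EReal) :=
  map_sum (⟨⟨(↑), EReal.coe_zero⟩, EReal.coe_add⟩ : ℝ →+ EReal) f s

lemma aux_sum_ne_bot {α : Type*} (s : Finset α) (f : α → EReal)
    (h : ∀ a ∈ s, f a ≠ ⊥) : ∑ a ∈ s, f a ≠ ⊥ := by
  classical
  induction s using Finset.induction with
  | empty => simp
  | @insert a s hx ih =>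
    rw [Finset.sum_insert hx]
    rw [Ne, EReal.add_eq_bot_iff]
    push_neg
    exact ⟨h a (Finset.mem_insert_self a s), ih fun b hb => h b (Finset.mem_insert_of_mem hb)⟩

lemma aux_sum_eq_top {α : Type*} (s : Finset α) (f : α → EReal) {a : α}
    (ha : a ∈ s) (hta : f a = ⊤) (h : ∀ b ∈ s, f b ≠ ⊥) : ∑ b ∈ s, f b = ⊤ := by
  classical
  rw [← Finset.add_sum_erase s f ha, hta]
  exact EReal.top_add_of_ne_bot (aux_sum_ne_bot _ _ fun b hb => h b (Finset.mem_erase.1 hb).2)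

lemma klDiv_ne_bot {Ω : Type*} [Fintype Ω] (p q : Ω → ℝ) : klDiv p q ≠ ⊥ := by
  unfold klDiv; split <;> simp

lemma klDiv_eq_coe {Ω : Type*} [Fintype Ω] {p q : Ω → ℝ}
    (h : ∀ ω, q ω = 0 → ¬ 0 < p ω) :
    klDiv p q = ((∑ ω, p ω * Real.log (p ω / q ω) : ℝ) : EReal) := by
  unfold klDiv
  rw [if_neg]
  rintro ⟨ω, h1, h2⟩
  exact h ω h2 h1

lemma klDiv_eq_top {Ω : Type*} [Fintype Ω] {p q : Ω → ℝ} {ω : Ω}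
    (h1 : 0 < p ω) (h2 : q ω = 0) : klDiv p q = ⊤ := by
  unfold klDiv
  rw [if_pos ⟨ω, h1, h2⟩]

lemma gibbs_s11 {Ω : Type*} [Fintype Ω] {p q : Ω → ℝ} (hp : ∀ ω, 0 ≤ p ω) (hq : ∀ ω, 0 ≤ q ω)
    (hs : ∑ ω, q ω ≤ ∑ ω, p ω) (h : ∀ ω, 0 < p ω → 0 < q ω) :
    0 ≤ ∑ ω, p ω * Real.log (p ω / q ω) := by
  have key : ∀ ω, p ω - q ω ≤ p ω * Real.log (p ω / q ω) := by
    intro ω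
    rcases eq_or_lt_of_le (hp ω) with h0 | h0
    · simp only [← h0, zero_mul, zero_sub, neg_nonpos]
      exact hq ω
    · have hqω := h ω h0
      have hlog := Real.log_le_sub_one_of_pos (div_pos hqω h0)
      rw [Real.log_div hqω.ne' h0.ne'] at hlog
      rw [Real.log_div h0.ne' hqω.ne']
      have hd : q ω / p ω * p ω = q ω := div_mul_cancel₀ _ h0.ne'
      nlinarith [h0]
  calc (0:ℝ) ≤ ∑ ω, (p ω - q ω) := by rw [Finset.sum_sub_distrib]; linarith
    _ ≤ _ := Finset.sum_le_sum fun ω _ => key ω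

/-- The chain-rule identity for averaged KL divergences (real-valued, safe case). -/
lemma kl_chain {Ω : Type*} [Fintype Ω] {N : ℕ} (p : Fin N → Ω → ℝ) (m q : Ω → ℝ)
    (hp : ∀ t ω, 0 ≤ p t ω) (hm : ∀ ω, (N : ℝ) * m ω = ∑ t, p t ω)
    (hq : ∀ ω, q ω = 0 → ∀ t, p t ω = 0) :
    ∑ t, ∑ ω, p t ω * Real.log (p t ω / q ω)
      = (∑ t, ∑ ω, p t ω * Real.log (p t ω / m ω))
        + (N : ℝ) * ∑ ω, m ω * Real.log (m ω / q ω) := by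
  classical
  rw [Finset.sum_comm (s := Finset.univ) (t := Finset.univ)
        (f := fun t ω => p t ω * Real.log (p t ω / q ω)),
      Finset.sum_comm (s := Finset.univ) (t := Finset.univ)
        (f := fun t ω => p t ω * Real.log (p t ω / m ω)),
      Finset.mul_sum, ← Finset.sum_add_distrib]
  refine Finset.sum_congr rfl fun ω _ => ?_
  have hterm : ∀ t, p t ω * Real.log (p t ω / q ω)
      = p t ω * Real.log (p t ω / m ω) + p t ω * Real.log (m ω / q ω) := by
    intro t
    rcases eq_or_lt_of_le (hp t ω) with h0 | h0
    · rw [← h0, zero_mul, zero_mul, zero_mul, add_zero]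
    · have hqω : q ω ≠ 0 := fun h => by
        have := hq ω h t; exact h0.ne this.symm
      have hmω : 0 < m ω := by
        have h1 : p t ω ≤ ∑ s, p s ω :=
          Finset.single_le_sum (fun s _ => hp s ω) (Finset.mem_univ t)
        rw [← hm ω] at h1
        nlinarith [h0.trans_le h1]
      rw [Real.log_div h0.ne' hqω, Real.log_div h0.ne' hmω.ne',
        Real.log_div hmω.ne' hqω]
      ring
  calc ∑ t, p t ω * Real.log (p t ω / q ω)
      = ∑ t, (p t ω * Real.log (p t ω / m ω) + p t ω * Real.log (m ω / q ω)) :=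
        Finset.sum_congr rfl fun t _ => hterm t
    _ = (∑ t, p t ω * Real.log (p t ω / m ω)) + (∑ t, p t ω) * Real.log (m ω / q ω) := by
        rw [Finset.sum_add_distrib, ← Finset.sum_mul]
    _ = (∑ t, p t ω * Real.log (p t ω / m ω)) + (N : ℝ) * (m ω * Real.log (m ω / q ω)) := by
        rw [← hm ω]; ring

/-- Summation against a coordinate function reduces to the coordinate marginal. -/
lemma marg_swap {n : ℕ} {Z : Fin n → Type*} [∀ j, Fintype (Z j)] [∀ j, DecidableEq (Z j)]
    (m : (∀ j, Z j) → ℝ) (j : Fin n) (f : Z j → ℝ) :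
    ∑ z : ∀ j, Z j, m z * f (z j) = ∑ w, margJ m j w * f w := by
  classical
  unfold margJ
  rw [eq_comm]
  calc ∑ w, (∑ z : ∀ j, Z j, if z j = w then m z else 0) * f w
      = ∑ w, ∑ z : ∀ j, Z j, (if z j = w then m z * f w else 0) := by
        refine Finset.sum_congr rfl fun w _ => ?_
        rw [Finset.sum_mul]
        exact Finset.sum_congr rfl fun z _ => by split <;> simp
    _ = ∑ z : ∀ j, Z j, ∑ w, (if z j = w then m z * f w else 0) := Finset.sum_comm
    _ = ∑ z : ∀ j, Z j, m z * f (z j) := by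
        refine Finset.sum_congr rfl fun z _ => ?_
        rw [Finset.sum_ite_eq]
        simp

lemma margJ_nonneg {n : ℕ} {Z : Fin n → Type*} [∀ j, Fintype (Z j)] [∀ j, DecidableEq (Z j)]
    {m : (∀ j, Z j) → ℝ} (hm : ∀ z, 0 ≤ m z) (j : Fin n) (w : Z j) :
    0 ≤ margJ m j w := by
  unfold margJ
  refine Finset.sum_nonneg fun z _ => ?_
  split
  · exact hm z
  · exact le_rfl

lemma margJ_pmf {n : ℕ} {Z : Fin n → Type*} [∀ j, Fintype (Z j)] [∀ j, DecidableEq (Z j)]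
    {m : (∀ j, Z j) → ℝ} (hm : IsPMF m) (j : Fin n) : IsPMF (margJ m j) := by
  refine ⟨margJ_nonneg hm.1 j, ?_⟩
  have := marg_swap m j (fun _ => (1:ℝ))
  simp only [mul_one] at this
  rw [← this, hm.2]

lemma margJ_ge {n : ℕ} {Z : Fin n → Type*} [∀ j, Fintype (Z j)] [∀ j, DecidableEq (Z j)]
    {m : (∀ j, Z j) → ℝ} (hm : ∀ z, 0 ≤ m z) (j : Fin n) (z : ∀ j, Z j) :
    m z ≤ margJ m j (z j) := by
  unfold margJ
  have : m z = if z j = z j then m z else 0 := by simp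
  rw [this]
  exact Finset.single_le_sum (f := fun z' => if z' j = z j then m z' else 0)
    (fun z' _ => by split <;> [skip; exact le_rfl] <;> exact hm z') (Finset.mem_univ z)

/-- Optimality of the product of marginals among factorized reference measures. -/
lemma fact_le {n : ℕ} {Z : Fin n → Type*} [∀ j, Fintype (Z j)] [∀ j, DecidableEq (Z j)]
    (m : (∀ j, Z j) → ℝ) (q : ∀ j, Z j → ℝ) (hm : IsPMF m) (hq : ∀ j, IsPMF (q j))
    (hpos : ∀ z, 0 < m z → 0 < ∏ j, q j (z j)) :
    ∑ z, m z * Real.log (m z / ∏ j, margJ m j (z j))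
      ≤ ∑ z, m z * Real.log (m z / ∏ j, q j (z j)) := by
  classical
  have hqj_pos : ∀ (j) (z : ∀ j, Z j), 0 < m z → 0 < q j (z j) := by
    intro j z hz
    have h := hpos z hz
    have hne : q j (z j) ≠ 0 :=
      Finset.prod_ne_zero_iff.1 h.ne' j (Finset.mem_univ j)
    exact lt_of_le_of_ne ((hq j).1 (z j)) (Ne.symm hne)
  have hmj_pos : ∀ (j) (z : ∀ j, Z j), 0 < m z → 0 < margJ m j (z j) :=
    fun j z hz => hz.trans_le (margJ_ge hm.1 j z)
  have key : ∑ z, m z * Real.log (m z / ∏ j, q j (z j))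
      - ∑ z, m z * Real.log (m z / ∏ j, margJ m j (z j))
      = ∑ j, ∑ w, margJ m j w * Real.log (margJ m j w / q j w) := by
    rw [← Finset.sum_sub_distrib]
    have step1 : ∀ z : ∀ j, Z j,
        m z * Real.log (m z / ∏ j, q j (z j))
          - m z * Real.log (m z / ∏ j, margJ m j (z j))
        = ∑ j, m z * (Real.log (margJ m j (z j)) - Real.log (q j (z j))) := by
      intro z
      rcases eq_or_lt_of_le (hm.1 z) with h0 | h0
      · simp [← h0]
      · have hq0 : ∀ j, q j (z j) ≠ 0 := fun j => (hqj_pos j z h0).ne'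
        have hmj0 : ∀ j, margJ m j (z j) ≠ 0 := fun j => (hmj_pos j z h0).ne'
        rw [Real.log_div h0.ne' (Finset.prod_ne_zero_iff.2 fun j _ => hq0 j),
          Real.log_div h0.ne' (Finset.prod_ne_zero_iff.2 fun j _ => hmj0 j),
          Real.log_prod (fun j _ => hq0 j), Real.log_prod (fun j _ => hmj0 j),
          ← Finset.mul_sum, Finset.sum_sub_distrib]
        ring
    calc ∑ z, (m z * Real.log (m z / ∏ j, q j (z j))
          - m z * Real.log (m z / ∏ j, margJ m j (z j)))
        = ∑ z, ∑ j, m z * (Real.log (margJ m j (z j)) - Real.log (q j (z j))) :=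
          Finset.sum_congr rfl fun z _ => step1 z
      _ = ∑ j, ∑ z, m z * (Real.log (margJ m j (z j)) - Real.log (q j (z j))) :=
          Finset.sum_comm
      _ = ∑ j, ∑ w, margJ m j w * (Real.log (margJ m j w) - Real.log (q j w)) :=
          Finset.sum_congr rfl fun j _ =>
            marg_swap m j (fun w => Real.log (margJ m j w) - Real.log (q j w))
      _ = ∑ j, ∑ w, margJ m j w * Real.log (margJ m j w / q j w) := by
          refine Finset.sum_congr rfl fun j _ => Finset.sum_congr rfl fun w _ => ?_
          rcases eq_or_lt_of_le (margJ_nonneg hm.1 j w) with h0 | h0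
          · rw [← h0, zero_mul, zero_mul]
          · have hqw : q j w ≠ 0 := by
              intro hq0
              obtain ⟨z, _, hz⟩ := Finset.exists_ne_zero_of_sum_ne_zero h0.ne'
              have hzj : z j = w := by by_contra hne; simp [hne] at hz
              have hmz : 0 < m z := lt_of_le_of_ne (hm.1 z) (by
                intro h; exact hz (by simp [← h]))
              exact (hqj_pos j z hmz).ne' (hzj ▸ hq0)
            rw [Real.log_div h0.ne' hqw]
  have hj : ∀ j, 0 ≤ ∑ w, margJ m j w * Real.log (margJ m j w / q j w) := by
    intro j
    refine gibbs_s11 (margJ_pmf hm j).1 (hq j).1 (by rw [(hq j).2, (margJ_pmf hm j).2]) ?_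
    intro w hw
    rcases eq_or_lt_of_le ((hq j).1 w) with h0 | h0
    · exfalso
      obtain ⟨z, _, hz⟩ := Finset.exists_ne_zero_of_sum_ne_zero hw.ne'
      have hzj : z j = w := by by_contra hne; simp [hne] at hz
      have hmz : 0 < m z := lt_of_le_of_ne (hm.1 z) (by intro h; exact hz (by simp [← h]))
      exact (hqj_pos j z hmz).ne' (hzj ▸ h0.symm)
    · exact h0
  have : 0 ≤ ∑ j, ∑ w, margJ m j w * Real.log (margJ m j w / q j w) :=
    Finset.sum_nonneg fun j _ => hj j
  linarith [key]

lemma wrap_coe (c β d x : ℝ) :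
    (c : EReal) + (β : EReal) * ((d : EReal) * (x : EReal)) = ((c + β * (d * x) : ℝ) : EReal) := by
  rw [EReal.coe_add, EReal.coe_mul, EReal.coe_mul]

/-- The key per-kernel identity. -/
lemma per_i {n N : ℕ} {Z : Fin n → Type*} [∀ j, Fintype (Z j)] [∀ j, DecidableEq (Z j)]
    (p : Fin N → (∀ j, Z j) → ℝ) (hp : ∀ t, IsPMF (p t)) (hN : 0 < N)
    (c β : ℝ) (hβ : 0 ≤ β) :
    (c : EReal) + (β : EReal) * (((1 / N : ℝ) : EReal) *
        ∑ t : Fin N, (klDiv (p t) (fun z => ∑ s : Fin N, (1 / N : ℝ) * p s z)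
          + klDiv (fun z => ∑ s : Fin N, (1 / N : ℝ) * p s z)
              (fun z => ∏ j, margJ (fun z' => ∑ s : Fin N, (1 / N : ℝ) * p s z') j (z j))))
    = ⨅ q : {q : ∀ j, Z j → ℝ // ∀ j, IsPMF (q j)},
        (c : EReal) + (β : EReal) * (((1 / N : ℝ) : EReal) *
          ∑ t : Fin N, klDiv (p t) (fun z => ∏ j, q.1 j (z j))) := by
  classical
  set m : (∀ j, Z j) → ℝ := fun z => ∑ s : Fin N, (1 / N : ℝ) * p s z with hm_def
  have hNR : (0:ℝ) < N := Nat.cast_pos.2 hN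
  have hm_nonneg : ∀ z, 0 ≤ m z := fun z =>
    Finset.sum_nonneg fun s _ => mul_nonneg (by positivity) ((hp s).1 z)
  have hm_eq : ∀ z, (N : ℝ) * m z = ∑ t, p t z := by
    intro z
    show (N:ℝ) * (∑ s : Fin N, (1/N:ℝ) * p s z) = ∑ t, p t z
    rw [← Finset.mul_sum, ← mul_assoc, mul_one_div, div_self hNR.ne', one_mul]
  have hm_pmf : IsPMF m := by
    refine ⟨hm_nonneg, ?_⟩
    calc ∑ z, m z = ∑ s : Fin N, ∑ z, (1/N:ℝ) * p s z := Finset.sum_comm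
      _ = ∑ s : Fin N, (1/N:ℝ) := Finset.sum_congr rfl fun s _ => by
          rw [← Finset.mul_sum, (hp s).2, mul_one]
      _ = 1 := by
          rw [Finset.sum_const, Finset.card_univ, Fintype.card_fin, nsmul_eq_mul]
          field_simp
  have hm_zero : ∀ z, m z = 0 → ∀ t, p t z = 0 := by
    intro z hz t
    have h1 : ∑ t, p t z = 0 := by rw [← hm_eq z, hz, mul_zero]
    exact (Finset.sum_eq_zero_iff_of_nonneg fun s _ => (hp s).1 z).1 h1 t (Finset.mem_univ t)
  have hm_pos : ∀ t z, 0 < p t z → 0 < m z := by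
    intro t z hptz
    rcases eq_or_lt_of_le (hm_nonneg z) with h0 | h0
    · exact absurd (hm_zero z h0.symm t) hptz.ne'
    · exact h0
  have hr_pos : ∀ z, 0 < m z → 0 < ∏ j, margJ m j (z j) := fun z hz =>
    Finset.prod_pos fun j _ => hz.trans_le (margJ_ge hm_nonneg j z)
  have hr0 : ∀ z, (∏ j, margJ m j (z j)) = 0 → ∀ t, p t z = 0 := by
    intro z h t
    by_contra hpt
    have := hr_pos z (hm_pos t z (lt_of_le_of_ne ((hp t).1 z) (Ne.symm hpt)))
    exact this.ne' h
  set S : ℝ := ∑ t, ∑ z, p t z * Real.log (p t z / m z) with hS_def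
  set T0 : ℝ := ∑ z, m z * Real.log (m z / ∏ j, margJ m j (z j)) with hT0_def
  -- LHS
  have hL : ∑ t : Fin N, (klDiv (p t) m
        + klDiv m (fun z => ∏ j, margJ m j (z j)))
      = ((S + (N:ℝ) * T0 : ℝ) : EReal) := by
    have ht : ∀ t : Fin N, klDiv (p t) m + klDiv m (fun z => ∏ j, margJ m j (z j))
        = (((∑ z, p t z * Real.log (p t z / m z)) + T0 : ℝ) : EReal) := by
      intro t
      rw [klDiv_eq_coe (fun z hz => by rw [hm_zero z hz t]; exact lt_irrefl 0),
        klDiv_eq_coe (fun z hz => by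
          intro hmz
          exact (hr_pos z hmz).ne' hz),
        ← EReal.coe_add]
    calc ∑ t : Fin N, (klDiv (p t) m + klDiv m (fun z => ∏ j, margJ m j (z j)))
        = ∑ t : Fin N, (((∑ z, p t z * Real.log (p t z / m z)) + T0 : ℝ) : EReal) :=
          Finset.sum_congr rfl fun t _ => ht t
      _ = ((∑ t : Fin N, ((∑ z, p t z * Real.log (p t z / m z)) + T0) : ℝ) : EReal) :=
          (aux_coe_sum _ _).symm
      _ = ((S + (N:ℝ) * T0 : ℝ) : EReal) := by
          rw [Finset.sum_add_distrib, Finset.sum_const, Finset.card_univ, Fintype.card_fin,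
            nsmul_eq_mul, hS_def]
  rw [hL, wrap_coe]
  refine le_antisymm (le_iInf fun q => ?_) ?_
  · -- lower bound
    obtain ⟨q, hq⟩ := q
    rcases eq_or_lt_of_le hβ with rfl | hb0
    · simp
    by_cases htop : ∃ z t, 0 < p t z ∧ (∏ j, q j (z j)) = 0
    · obtain ⟨z, t, h1, h2⟩ := htop
      have h4 : ∑ t : Fin N, klDiv (p t) (fun z => ∏ j, q j (z j)) = ⊤ :=
        aux_sum_eq_top _ _ (Finset.mem_univ t) (klDiv_eq_top h1 h2)
          (fun b _ => klDiv_ne_bot _ _)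
      rw [h4, EReal.coe_mul_top_of_pos (by positivity : (0:ℝ) < 1/N),
        EReal.coe_mul_top_of_pos hb0, EReal.coe_add_top]
      exact le_top
    · push_neg at htop
      have hsafe : ∀ z, (∏ j, q j (z j)) = 0 → ∀ t, p t z = 0 := by
        intro z h t
        by_contra hpt
        exact (htop z t (lt_of_le_of_ne ((hp t).1 z) (Ne.symm hpt))) h
      have hqpos : ∀ z, 0 < m z → 0 < ∏ j, q j (z j) := by
        intro z hz
        rcases eq_or_lt_of_le (Finset.prod_nonneg fun j _ => (hq j).1 (z j)) with h0 | h0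
        · exfalso
          have h1 : ∑ t, p t z = 0 :=
            Finset.sum_eq_zero fun t _ => hsafe z h0.symm t
          rw [← hm_eq z] at h1
          nlinarith
        · exact h0
      set Tq : ℝ := ∑ z, m z * Real.log (m z / ∏ j, q j (z j)) with hTq_def
      have hBq : ∑ t : Fin N, klDiv (p t) (fun z => ∏ j, q j (z j))
          = ((S + (N:ℝ) * Tq : ℝ) : EReal) := by
        have ht : ∀ t : Fin N, klDiv (p t) (fun z => ∏ j, q j (z j))
            = (((∑ z, p t z * Real.log (p t z / ∏ j, q j (z j))) : ℝ) : EReal) := fun t =>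
          klDiv_eq_coe (fun z hz => by rw [hsafe z hz t]; exact lt_irrefl 0)
        rw [Finset.sum_congr rfl fun t _ => ht t, ← aux_coe_sum]
        rw [kl_chain p m (fun z => ∏ j, q j (z j)) (fun t => (hp t).1) hm_eq hsafe]
      rw [hBq, wrap_coe, EReal.coe_le_coe_iff]
      have hT : T0 ≤ Tq := fact_le m q hm_pmf hq hqpos
      have h5 : (1/N:ℝ) * (S + (N:ℝ) * T0) ≤ (1/N:ℝ) * (S + (N:ℝ) * Tq) := by
        have h6 : S + (N:ℝ) * T0 ≤ S + (N:ℝ) * Tq := by nlinarith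
        exact mul_le_mul_of_nonneg_left h6 (by positivity)
      linarith [mul_le_mul_of_nonneg_left h5 hβ]
  · -- the infimum is attained at the product of marginals
    refine iInf_le_of_le ⟨fun j => margJ m j, fun j => margJ_pmf hm_pmf j⟩ (le_of_eq ?_)
    have hBq : ∑ t : Fin N, klDiv (p t) (fun z => ∏ j, margJ m j (z j))
        = ((S + (N:ℝ) * T0 : ℝ) : EReal) := by
      have ht : ∀ t : Fin N, klDiv (p t) (fun z => ∏ j, margJ m j (z j))
          = (((∑ z, p t z * Real.log (p t z / ∏ j, margJ m j (z j))) : ℝ) : EReal) := fun t =>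
        klDiv_eq_coe (fun z hz => by rw [hr0 z hz t]; exact lt_irrefl 0)
      rw [Finset.sum_congr rfl fun t _ => ht t, ← aux_coe_sum]
      rw [kl_chain p m (fun z => ∏ j, margJ m j (z j)) (fun t => (hp t).1) hm_eq hr0]
    rw [hBq, wrap_coe]

/-- Fix a family of Markov kernels `k i` from `X` to `Z = Z_1 × ⋯ × Z_n` (indexed by
`i : ι`), training samples `xs 1, …, xs N` (carrying the empirical pmf with equal weights
`1/N`), per-sample loss functions `ℓ t : Z → ℝ` giving the loss term
`L(i) = (1/N) ∑ t, E_{z ∼ k i (xs t)}[ℓ t z]`, and `β ≥ 0`.  Then the infimum over `i` of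
`L(i) + β · (1/N) ∑ t { KL(k i (xs t) ‖ p_Z) + TC(p_Z) }`, where
`p_Z z = ∑ t, (1/N) * k i (xs t) z` is the `Z`-marginal of the joint pmf determined by
the empirical pmf and the kernel, equals the infimum over pairs `(i, q)`, with `q` a
factorized pmf `∏ j, q j` on `Z`, of `L(i) + β · (1/N) ∑ t, KL(k i (xs t) ‖ ∏ j, q j)`. -/
theorem iInf_empirical_IB_eq_iInf_factorized
    {X : Type*} [Fintype X] {n N : ℕ} {Z : Fin n → Type*}
    [∀ j, Fintype (Z j)] [∀ j, DecidableEq (Z j)] {ι : Type*}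
    (k : ι → X → (∀ j, Z j) → ℝ) (hk : ∀ i x, IsPMF (k i x))
    (hN : 0 < N) (xs : Fin N → X) (ℓ : Fin N → (∀ j, Z j) → ℝ)
    (β : ℝ) (hβ : 0 ≤ β) :
    (⨅ i : ι,
        (((1 / N : ℝ) * ∑ t : Fin N, ∑ z, k i (xs t) z * ℓ t z : ℝ) : EReal)
          + (β : EReal) * (((1 / N : ℝ) : EReal) *
              ∑ t : Fin N,
                (klDiv (k i (xs t)) (fun z => ∑ s : Fin N, (1 / N : ℝ) * k i (xs s) z)
                  + klDiv (fun z => ∑ s : Fin N, (1 / N : ℝ) * k i (xs s) z)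
                      (fun z => ∏ j, margJ
                        (fun z' => ∑ s : Fin N, (1 / N : ℝ) * k i (xs s) z') j (z j)))))
      = ⨅ (i : ι) (q : {q : ∀ j, Z j → ℝ // ∀ j, IsPMF (q j)}),
          (((1 / N : ℝ) * ∑ t : Fin N, ∑ z, k i (xs t) z * ℓ t z : ℝ) : EReal)
            + (β : EReal) * (((1 / N : ℝ) : EReal) *
                ∑ t : Fin N, klDiv (k i (xs t)) (fun z => ∏ j, q.1 j (z j))) := by
  refine iInf_congr fun i => ?_
  exact per_i (fun t => k i (xs t)) (fun t => hk i (xs t)) hN _ β hβ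
end
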